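/- arXiv:1612.00698 — 2 statements merged into one kernel-verified Lean document; each statement's English description precedes it below -/
import Mathlib

section
/- Let G be a connected compact Lie group and Υ ∈ Lie(G). Then the stabilizer S(Υ) = {x ∈ G : Ad(x)(Υ) = Υ} contains a maximal torus of G. -/
/-!
The one-parameter subgroup `t ↦ exp (t • Υ)` is a connected abelian subgroup of `G`. By Zorn's
lemma (the union of a chain of connected abelian subgroups is again one) it lies in a maximal
connected abelian subgroup `T` of `G`. Its closure is still connected and abelian, so `T` is
closed, hence compact, i.e. a maximal torus. Every element of `T` commutes with all
`exp (t • Υ)`, and differentiating at `t = 0` shows that it commutes with `Υ`.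
-/

open NormedSpace

namespace Subgroup

variable {Γ : Type*} [Group Γ] [TopologicalSpace Γ]

def IsConnectedAbelian (K : Subgroup Γ) : Prop :=
  IsConnected (K : Set Γ) ∧ ∀ a ∈ K, ∀ b ∈ K, a * b = b * a

theorem isConnectedAbelian_iSup_of_directed {ι : Type*} [Nonempty ι] {K : ι → Subgroup Γ}
    (hdir : Directed (· ≤ ·) K) (hK : ∀ i, (K i).IsConnectedAbelian) :
    (⨆ i, K i).IsConnectedAbelian := by
  have hcoe := coe_iSup_of_directed hdir
  refine ⟨?_, fun a ha b hb => ?_⟩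
  · rw [hcoe]
    exact ⟨⟨1, Set.mem_iUnion.2 ⟨Classical.arbitrary ι, (K _).one_mem⟩⟩,
      isPreconnected_iUnion ⟨1, Set.mem_iInter.2 fun i => (K i).one_mem⟩
        fun i => (hK i).1.isPreconnected⟩
  · rw [← SetLike.mem_coe, hcoe, Set.mem_iUnion] at ha hb
    obtain ⟨i, hi⟩ := ha
    obtain ⟨j, hj⟩ := hb
    obtain ⟨k, hik, hjk⟩ := hdir i j
    exact (hK k).2 a (hik hi) b (hjk hj)

theorem exists_le_maximal_isConnectedAbelian_le {G H : Subgroup Γ} (hHG : H ≤ G)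
    (hH : H.IsConnectedAbelian) :
    ∃ T, H ≤ T ∧ Maximal (fun K : Subgroup Γ => K ≤ G ∧ K.IsConnectedAbelian) T := by
  refine zorn_le_nonempty₀ _ (fun c hc hchain K hK => ?_) H ⟨hHG, hH⟩
  have : Nonempty c := ⟨⟨K, hK⟩⟩
  refine ⟨⨆ L : c, (L : Subgroup Γ), ⟨iSup_le fun L => (hc L.2).1,
    isConnectedAbelian_iSup_of_directed hchain.directedOn.directed_val fun L => (hc L.2).2⟩,
    fun L hL => le_iSup (fun L : c => (L : Subgroup Γ)) ⟨L, hL⟩⟩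

variable [IsTopologicalGroup Γ] [T2Space Γ]

theorem IsConnectedAbelian.topologicalClosure {K : Subgroup Γ} (hK : K.IsConnectedAbelian) :
    K.topologicalClosure.IsConnectedAbelian := by
  let := K.commGroupTopologicalClosure fun a b => Subtype.ext (hK.2 a a.2 b b.2)
  refine ⟨?_, fun a ha b hb => congrArg Subtype.val (mul_comm (⟨a, ha⟩ : K.topologicalClosure) ⟨b, hb⟩)⟩
  rw [topologicalClosure_coe]
  exact hK.1.closure

theorem isClosed_of_maximal_isConnectedAbelian_le {G T : Subgroup Γ} (hG : IsClosed (G : Set Γ))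
    (hT : Maximal (fun K : Subgroup Γ => K ≤ G ∧ K.IsConnectedAbelian) T) :
    IsClosed (T : Set Γ) := by
  have hle : T.topologicalClosure ≤ T :=
    hT.2 ⟨T.topologicalClosure_minimal hT.1.1 hG, hT.1.2.topologicalClosure⟩ T.le_topologicalClosure
  rw [← le_antisymm hle T.le_topologicalClosure]
  exact T.isClosed_topologicalClosure

end Subgroup

section Exponential

variable {𝔸 : Type*} [NormedRing 𝔸] [NormedAlgebra ℝ 𝔸] [CompleteSpace 𝔸]

theorem exp_add_smul (x : 𝔸) (s t : ℝ) : exp ((s + t) • x) = exp (s • x) * exp (t • x) := by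
  let : NormedAlgebra ℚ 𝔸 := NormedAlgebra.restrictScalars ℚ ℝ 𝔸
  rw [add_smul, exp_add_of_commute (((Commute.refl x).smul_left s).smul_right t)]

theorem continuous_exp_smul (x : 𝔸) : Continuous fun t : ℝ => exp (t • x) :=
  continuous_iff_continuousAt.2 fun t => (hasDerivAt_exp_smul_const x t).continuousAt

theorem Commute.of_forall_exp_smul {a x : 𝔸} (h : ∀ t : ℝ, Commute a (NormedSpace.exp (t • x))) :
    Commute a x := by
  have hl := (hasDerivAt_exp_smul_const x (0 : ℝ)).const_mul a
  have hr := (hasDerivAt_exp_smul_const x (0 : ℝ)).mul_const a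
  rw [funext fun t => (h t).eq] at hl
  show a * x = x * a
  simpa only [zero_smul, exp_zero, one_mul] using hl.unique hr

noncomputable def expSmulUnits (x : 𝔸) (t : ℝ) : 𝔸ˣ where
  val := exp (t • x)
  inv := exp ((-t) • x)
  val_inv := by rw [← exp_add_smul, add_neg_cancel, zero_smul, exp_zero]
  inv_val := by rw [← exp_add_smul, neg_add_cancel, zero_smul, exp_zero]

theorem continuous_expSmulUnits (x : 𝔸) : Continuous (expSmulUnits x) :=
  Units.continuous_iff.2 ⟨continuous_exp_smul x, (continuous_exp_smul x).comp continuous_neg⟩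

noncomputable def oneParameterSubgroup (x : 𝔸) : Subgroup 𝔸ˣ where
  carrier := Set.range (expSmulUnits x)
  one_mem' := ⟨0, Units.ext (by simp [expSmulUnits])⟩
  mul_mem' := by
    rintro _ _ ⟨s, rfl⟩ ⟨t, rfl⟩
    exact ⟨s + t, Units.ext (exp_add_smul x s t)⟩
  inv_mem' := by
    rintro _ ⟨t, rfl⟩
    exact ⟨-t, Units.ext (by simp [expSmulUnits])⟩

theorem expSmulUnits_mem_oneParameterSubgroup (x : 𝔸) (t : ℝ) :
    expSmulUnits x t ∈ oneParameterSubgroup x :=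
  ⟨t, rfl⟩

theorem isConnectedAbelian_oneParameterSubgroup (x : 𝔸) :
    (oneParameterSubgroup x).IsConnectedAbelian := by
  refine ⟨isConnected_range (continuous_expSmulUnits x), ?_⟩
  rintro _ ⟨s, rfl⟩ _ ⟨t, rfl⟩
  exact Units.ext (by simp only [expSmulUnits, Units.val_mul, ← exp_add_smul, add_comm])

end Exponential

theorem stabilizer_contains_maximal_torus_general
    (n : ℕ) (G : Subgroup (Matrix.GeneralLinearGroup (Fin n) ℝ))
    (hGcompact : IsCompact (G : Set (Matrix.GeneralLinearGroup (Fin n) ℝ)))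
    (Υ : Matrix (Fin n) (Fin n) ℝ)
    (hΥ : ∀ t : ℝ, ∃ u : Matrix.GeneralLinearGroup (Fin n) ℝ,
      u ∈ G ∧ (u : Matrix (Fin n) (Fin n) ℝ) = NormedSpace.exp (t • Υ)) :
    ∃ T : Subgroup (Matrix.GeneralLinearGroup (Fin n) ℝ),
      T ≤ G ∧
      IsCompact (T : Set (Matrix.GeneralLinearGroup (Fin n) ℝ)) ∧
      IsConnected (T : Set (Matrix.GeneralLinearGroup (Fin n) ℝ)) ∧
      (∀ a ∈ T, ∀ b ∈ T, a * b = b * a) ∧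
      (∀ T' : Subgroup (Matrix.GeneralLinearGroup (Fin n) ℝ),
        T' ≤ G → IsCompact (T' : Set (Matrix.GeneralLinearGroup (Fin n) ℝ)) →
        IsConnected (T' : Set (Matrix.GeneralLinearGroup (Fin n) ℝ)) →
        (∀ a ∈ T', ∀ b ∈ T', a * b = b * a) → T ≤ T' → T' = T) ∧
      (∀ x ∈ T, (x : Matrix (Fin n) (Fin n) ℝ) * Υ = Υ * (x : Matrix (Fin n) (Fin n) ℝ)) := by
  -- `exp` does not depend on the norm; any submultiplicative one will do.
  let : NormedRing (Matrix (Fin n) (Fin n) ℝ) := Matrix.linftyOpNormedRing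
  let : NormedAlgebra ℝ (Matrix (Fin n) (Fin n) ℝ) := Matrix.linftyOpNormedAlgebra
  have hHG : oneParameterSubgroup Υ ≤ G := by
    rintro _ ⟨t, rfl⟩
    obtain ⟨u, huG, hu⟩ := hΥ t
    rwa [show expSmulUnits Υ t = u from Units.ext hu.symm]
  obtain ⟨T, hHT, hTmax⟩ := Subgroup.exists_le_maximal_isConnectedAbelian_le hHG
    (isConnectedAbelian_oneParameterSubgroup Υ)
  have hTclosed := Subgroup.isClosed_of_maximal_isConnectedAbelian_le hGcompact.isClosed hTmax
  obtain ⟨hTG, hTconn, hTcomm⟩ := hTmax.prop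
  refine ⟨T, hTG, hGcompact.of_isClosed_subset hTclosed hTG, hTconn, hTcomm, ?_, ?_⟩
  · intro T' hT'G _ hT'conn hT'comm hTT'
    exact le_antisymm (hTmax.2 ⟨hT'G, hT'conn, hT'comm⟩ hTT') hTT'
  · intro x hx
    refine Commute.eq (Commute.of_forall_exp_smul fun t => ?_)
    exact congrArg Units.val
      (hTcomm x hx _ (hHT (expSmulUnits_mem_oneParameterSubgroup Υ t)))

/-- Let `G` be a connected compact (linear) Lie group, realized as a compact
connected subgroup of `GL(n, ℝ)`, with Lie algebra
`Lie(G) = {X | exp(tX) ∈ G for all t ∈ ℝ}`, and let `Υ ∈ Lie(G)`.  Then the stabilizer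
`S(Υ) = {x ∈ G | Ad(x)Υ = Υ}` (i.e. `xΥ = Υx`) contains a maximal torus of `G`, that is a
maximal compact connected abelian subgroup of `G`. -/
theorem stabilizer_contains_maximal_torus
    (n : ℕ) (G : Subgroup (Matrix.GeneralLinearGroup (Fin n) ℝ))
    (hGcompact : IsCompact (G : Set (Matrix.GeneralLinearGroup (Fin n) ℝ)))
    (hGconn : IsConnected (G : Set (Matrix.GeneralLinearGroup (Fin n) ℝ)))
    (Υ : Matrix (Fin n) (Fin n) ℝ)
    (hΥ : ∀ t : ℝ, ∃ u : Matrix.GeneralLinearGroup (Fin n) ℝ,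
      u ∈ G ∧ (u : Matrix (Fin n) (Fin n) ℝ) = NormedSpace.exp (t • Υ)) :
    ∃ T : Subgroup (Matrix.GeneralLinearGroup (Fin n) ℝ),
      T ≤ G ∧
      IsCompact (T : Set (Matrix.GeneralLinearGroup (Fin n) ℝ)) ∧
      IsConnected (T : Set (Matrix.GeneralLinearGroup (Fin n) ℝ)) ∧
      (∀ a ∈ T, ∀ b ∈ T, a * b = b * a) ∧
      (∀ T' : Subgroup (Matrix.GeneralLinearGroup (Fin n) ℝ),
        T' ≤ G → IsCompact (T' : Set (Matrix.GeneralLinearGroup (Fin n) ℝ)) →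
        IsConnected (T' : Set (Matrix.GeneralLinearGroup (Fin n) ℝ)) →
        (∀ a ∈ T', ∀ b ∈ T', a * b = b * a) → T ≤ T' → T' = T) ∧
      (∀ x ∈ T, (x : Matrix (Fin n) (Fin n) ℝ) * Υ = Υ * (x : Matrix (Fin n) (Fin n) ℝ)) :=
  stabilizer_contains_maximal_torus_general n G hGcompact Υ hΥ
end

section
/- Let v be a complex Lie subalgebra of the complexification k of a compact Lie algebra k0, and suppose v is n-reductive, i.e. v = (v ∩ v̄) ⊕ v_n where v_n is the nilradical of v. Then v_n ⊕ v̄_n = v_n ⊕ ((v_n ⊕ v̄_n) ∩ k0), and consequently k decomposes as a real direct sum k = k0 ⊕ i·m0 ⊕ (i·v0 ⊕ v_n), where v0 = v ∩ k0 and m0 is the orthogonal complement of (v + v̄) ∩ k0 in k0 for an Ad-invariant inner product. -/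
/-!
Let `σ` be the conjugation of `k = ℂ ⊗ k0` and `D = v ∩ v̄`, a `σ`-stable subspace. Because
`v = D ⊕ v_n`, the sum `D + v_n + v̄_n` is direct: if `d + n + σ n' = 0` then `σ n' ∈ v`, so
`n' ∈ D ∩ v_n = 0`. Hence a real point of `v + v̄ = D + v_n + v̄_n` has the form `a + n + σ n`
with `a` a real point of `v` and `n ∈ v_n`; moreover `i (n + σ n) = 2 i n - (i n + σ (i n))`
with `i n + σ (i n)` real. Splitting `x ∈ k` into real and imaginary parts and the imaginary part
along `k0 = ((v + v̄) ∩ k0) ⊕ m0` therefore writes `x` as a sum in `k0 + i m0 + i v0 + v_n`.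
For uniqueness, in a vanishing sum `a + i m + i c + n` the element `a + i m` lies in `v`, so
`2 i m = (a + i m) - σ (a + i m) ∈ v + v̄` forces `m = 0`; then `σ n ∈ v` forces `n = 0`.
-/

open scoped TensorProduct

open Function Set Complex ComplexConjugate

section FourfoldSum

variable {G : Type*} [AddCommGroup G]

theorem existsUnique_add_four {A B C D : AddSubgroup G}
    (hspan : ∀ x, ∃ a ∈ A, ∃ b ∈ B, ∃ c ∈ C, ∃ d ∈ D, x = a + b + c + d)
    (hindep : ∀ a ∈ A, ∀ b ∈ B, ∀ c ∈ C, ∀ d ∈ D, a + b + c + d = 0 →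
      a = 0 ∧ b = 0 ∧ c = 0 ∧ d = 0) (x : G) :
    ∃! t : G × G × G × G, t.1 ∈ A ∧ t.2.1 ∈ B ∧ t.2.2.1 ∈ C ∧ t.2.2.2 ∈ D ∧
      x = t.1 + t.2.1 + t.2.2.1 + t.2.2.2 := by
  obtain ⟨a, ha, b, hb, c, hc, d, hd, rfl⟩ := hspan x
  refine ⟨(a, b, c, d), ⟨ha, hb, hc, hd, rfl⟩, ?_⟩
  rintro ⟨a', b', c', d'⟩ ⟨ha', hb', hc', hd', hsum⟩
  obtain ⟨h₁, h₂, h₃, h₄⟩ := hindep _ (sub_mem ha' ha) _ (sub_mem hb' hb) _ (sub_mem hc' hc)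
    _ (sub_mem hd' hd) (by rw [← sub_eq_zero.mpr hsum.symm]; abel)
  rw [sub_eq_zero] at h₁ h₂ h₃ h₄
  exact Prod.ext h₁ (Prod.ext h₂ (Prod.ext h₃ h₄))

end FourfoldSum

section FixedPoints

variable {G F : Type*} [AddCommGroup G] [FunLike F G G] [AddMonoidHomClass F G G]

def fixedAddSubgroup (f : F) : AddSubgroup G where
  carrier := {x | f x = x}
  add_mem' {x y} hx hy := show f (x + y) = x + y by rw [map_add, hx, hy]
  zero_mem' := map_zero f
  neg_mem' {x} hx := show f (-x) = -x by rw [map_neg, hx]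

@[simp]
theorem mem_fixedAddSubgroup {f : F} {x : G} : x ∈ fixedAddSubgroup f ↔ f x = x :=
  Iff.rfl

theorem add_apply_mem_fixedAddSubgroup {f : F} (hf : Involutive f) (x : G) :
    x + f x ∈ fixedAddSubgroup f := by
  rw [mem_fixedAddSubgroup, map_add, hf x, add_comm]

theorem image2_add_image_eq_image2_add_inter_fixedAddSubgroup {f : F} (hf : Involutive f)
    (N : AddSubgroup G) :
    image2 (· + ·) (N : Set G) (f '' N) =
      image2 (· + ·) (N : Set G) (image2 (· + ·) (N : Set G) (f '' N) ∩ fixedAddSubgroup f) := by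
  ext x
  constructor
  · rintro ⟨n, hn, _, ⟨n', hn', rfl⟩, rfl⟩
    refine ⟨n - n', sub_mem hn hn', n' + f n',
      ⟨⟨n', hn', f n', ⟨n', hn', rfl⟩, rfl⟩, add_apply_mem_fixedAddSubgroup hf n'⟩, ?_⟩
    beta_reduce
    abel
  · rintro ⟨n, hn, _, ⟨⟨n₁, hn₁, _, ⟨n₂, hn₂, rfl⟩, rfl⟩, -⟩, rfl⟩
    exact ⟨n + n₁, add_mem hn hn₁, f n₂, ⟨n₂, hn₂, rfl⟩, by beta_reduce; abel⟩

end FixedPoints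

section RealForm

variable {K : Type*} [AddCommGroup K] [Module ℂ K] {σ : K →ₛₗ[starRingEnd ℂ] K}

theorem map_I_smul (x : K) : σ (I • x) = -(I • σ x) := by
  rw [map_smulₛₗ, conj_I, neg_smul]

theorem eq_zero_of_add_I_smul_eq_zero {a b : K} (ha : a ∈ fixedAddSubgroup σ)
    (hb : b ∈ fixedAddSubgroup σ) (h : a + I • b = 0) : a = 0 ∧ b = 0 := by
  have hconj : a - I • b = 0 := by
    simpa only [map_add, map_I_smul, mem_fixedAddSubgroup.mp ha, mem_fixedAddSubgroup.mp hb,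
      map_zero, ← sub_eq_add_neg] using congrArg σ h
  have h2Ib : (2 * I) • b = (a + I • b) - (a - I • b) := by module
  rw [h, hconj, sub_zero, smul_eq_zero] at h2Ib
  have hb0 : b = 0 := h2Ib.resolve_left (by simp)
  rw [hb0, smul_zero, add_zero] at h
  exact ⟨h, hb0⟩

theorem exists_eq_add_I_smul (hσ : Involutive σ) (x : K) :
    ∃ a ∈ fixedAddSubgroup σ, ∃ b ∈ fixedAddSubgroup σ, x = a + I • b := by
  refine ⟨(2⁻¹ : ℂ) • (x + σ x), ?_, (2⁻¹ * I) • (σ x - x), ?_, ?_⟩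
  · simp [map_smulₛₗ, hσ x, add_comm, map_ofNat]
  · simp [map_smulₛₗ, hσ x, map_ofNat, ← smul_neg]
  · rw [smul_smul, ← mul_assoc, mul_comm I, mul_assoc, I_mul_I]
    module

theorem apply_mem_inf_map (hσ : Involutive σ) {v : Submodule ℂ K} {x : K}
    (hx : x ∈ v ⊓ v.map σ) : σ x ∈ v ⊓ v.map σ := by
  obtain ⟨hxv, y, hyv, rfl⟩ := Submodule.mem_inf.mp hx
  exact Submodule.mem_inf.mpr ⟨by rwa [hσ y], σ y, hxv, rfl⟩

section NReductive

variable {v vn : Submodule ℂ K}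

theorem eq_zero_of_mem_of_map_mem (hσ : Involutive σ) (hle : vn ≤ v)
    (hdisj : Disjoint (v ⊓ v.map σ) vn) {n : K} (hn : n ∈ vn) (hσn : σ n ∈ v) : n = 0 :=
  Submodule.disjoint_def.mp hdisj n (Submodule.mem_inf.mpr ⟨hle hn, σ n, hσn, hσ n⟩) hn

theorem eq_zero_of_add_add_map_eq_zero (hσ : Involutive σ) (hle : vn ≤ v)
    (hdisj : Disjoint (v ⊓ v.map σ) vn) {d n n' : K} (hd : d ∈ v ⊓ v.map σ) (hn : n ∈ vn)
    (hn' : n' ∈ vn) (h : d + n + σ n' = 0) : d = 0 ∧ n = 0 ∧ n' = 0 := by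
  have hn'0 : n' = 0 := by
    refine eq_zero_of_mem_of_map_mem hσ hle hdisj hn' ?_
    rw [eq_neg_of_add_eq_zero_right h]
    exact neg_mem (add_mem (Submodule.mem_inf.mp hd).1 (hle hn))
  rw [hn'0, map_zero, add_zero] at h
  have hd0 : d = 0 := by
    refine Submodule.disjoint_def.mp hdisj d hd ?_
    rw [eq_neg_of_add_eq_zero_left h]
    exact neg_mem hn
  rw [hd0, zero_add] at h
  exact ⟨hd0, h, hn'0⟩

theorem exists_eq_add_add_map_of_mem_sup_map (hσ : Involutive σ)
    (hsup : v ⊓ v.map σ ⊔ vn = v) {f : K} (hf : f ∈ v ⊔ v.map σ) :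
    ∃ d ∈ v ⊓ v.map σ, ∃ n ∈ vn, ∃ n' ∈ vn, f = d + n + σ n' := by
  obtain ⟨y, hy, _, ⟨w, hw, rfl⟩, rfl⟩ := Submodule.mem_sup.mp hf
  rw [← hsup] at hy hw
  obtain ⟨d, hd, n, hn, rfl⟩ := Submodule.mem_sup.mp hy
  obtain ⟨d', hd', n', hn', rfl⟩ := Submodule.mem_sup.mp hw
  refine ⟨d + σ d', add_mem hd (apply_mem_inf_map hσ hd'), n, hn, n', hn', ?_⟩
  rw [map_add]; abel

theorem exists_eq_add_add_map_of_mem_sup_map_of_fixed (hσ : Involutive σ) (hle : vn ≤ v)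
    (hsup : v ⊓ v.map σ ⊔ vn = v) (hdisj : Disjoint (v ⊓ v.map σ) vn) {f : K}
    (hf : f ∈ v ⊔ v.map σ) (hfix : σ f = f) :
    ∃ a ∈ v, σ a = a ∧ ∃ n ∈ vn, f = a + (n + σ n) := by
  obtain ⟨d, hd, n, hn, n', hn', rfl⟩ := exists_eq_add_add_map_of_mem_sup_map hσ hsup hf
  have hzero : (d - σ d) + (n - n') + σ (n' - n) = 0 := by
    rw [← sub_eq_zero.mpr hfix.symm]
    simp only [map_add, map_sub, hσ _]
    abel
  obtain ⟨hd0, hn0, -⟩ := eq_zero_of_add_add_map_eq_zero hσ hle hdisj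
    (sub_mem hd (apply_mem_inf_map hσ hd)) (sub_mem hn hn') (sub_mem hn' hn) hzero
  rw [sub_eq_zero] at hd0 hn0
  exact ⟨d, (Submodule.mem_inf.mp hd).1, hd0.symm, n, hn, by rw [hn0, add_assoc]⟩

theorem eq_zero_of_add_I_smul_add_I_smul_add_eq_zero (hσ : Involutive σ) (hle : vn ≤ v)
    (hdisj : Disjoint (v ⊓ v.map σ) vn) {M : AddSubgroup K} (hMfix : M ≤ fixedAddSubgroup σ)
    (hMdisj : ∀ m ∈ M, m ∈ v ⊔ v.map σ → m = 0) {a m c n : K} (ha : a ∈ fixedAddSubgroup σ)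
    (hm : m ∈ M) (hc : c ∈ v) (hcfix : c ∈ fixedAddSubgroup σ) (hn : n ∈ vn)
    (h : a + I • m + I • c + n = 0) : a = 0 ∧ m = 0 ∧ c = 0 ∧ n = 0 := by
  have hσa := mem_fixedAddSubgroup.mp ha
  have hσm := mem_fixedAddSubgroup.mp (hMfix hm)
  have hσc := mem_fixedAddSubgroup.mp hcfix
  have hsv : a + I • m ∈ v := by
    rw [eq_neg_of_add_eq_zero_left (a := a + I • m) (by rwa [← add_assoc])]
    exact neg_mem (add_mem (v.smul_mem I hc) (hle hn))
  have hm0 : m = 0 := by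
    refine hMdisj m hm ?_
    have h2Im : (2 * I) • m = (a + I • m) - σ (a + I • m) := by
      rw [map_add, map_I_smul, hσa, hσm]; module
    have h2Im_mem : (2 * I) • m ∈ v ⊔ v.map σ := h2Im ▸
      sub_mem (Submodule.mem_sup_left hsv) (Submodule.mem_sup_right ⟨_, hsv, rfl⟩)
    have hm_mem := (v ⊔ v.map σ).smul_mem (2 * I)⁻¹ h2Im_mem
    rwa [smul_smul, inv_mul_cancel₀ (mul_ne_zero two_ne_zero I_ne_zero), one_smul] at hm_mem
  subst hm0
  rw [smul_zero, add_zero] at h hsv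
  have hn0 : n = 0 := by
    refine eq_zero_of_mem_of_map_mem hσ hle hdisj hn ?_
    rw [eq_neg_of_add_eq_zero_right h, map_neg, map_add, map_I_smul, hσa, hσc,
      ← sub_eq_add_neg]
    exact neg_mem (sub_mem hsv (v.smul_mem I hc))
  rw [hn0, add_zero] at h
  obtain ⟨ha0, hc0⟩ := eq_zero_of_add_I_smul_eq_zero ha hcfix h
  exact ⟨ha0, rfl, hc0, hn0⟩

theorem exists_eq_add_I_smul_add_I_smul_add (hσ : Involutive σ) (hle : vn ≤ v)
    (hsup : v ⊓ v.map σ ⊔ vn = v) (hdisj : Disjoint (v ⊓ v.map σ) vn) {M : AddSubgroup K}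
    (hMspan : ∀ f ∈ fixedAddSubgroup σ, ∃ w ∈ v ⊔ v.map σ, σ w = w ∧ ∃ m ∈ M, f = w + m)
    (x : K) : ∃ a ∈ fixedAddSubgroup σ, ∃ m ∈ M, ∃ c ∈ v, c ∈ fixedAddSubgroup σ ∧
      ∃ n ∈ vn, x = a + I • m + I • c + n := by
  obtain ⟨a, ha, b, hb, rfl⟩ := exists_eq_add_I_smul hσ x
  obtain ⟨w, hw, hσw, m, hm, rfl⟩ := hMspan b hb
  obtain ⟨c, hc, hσc, n, hn, rfl⟩ :=
    exists_eq_add_add_map_of_mem_sup_map_of_fixed hσ hle hsup hdisj hw hσw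
  -- `I • (n + σ n) = 2 • I • n - (I • n + σ (I • n))`, and the bracket is fixed
  refine ⟨a - (I • n + σ (I • n)), sub_mem ha (add_apply_mem_fixedAddSubgroup hσ _), m, hm,
    c, hc, hσc, (2 : ℂ) • I • n, vn.smul_mem _ (vn.smul_mem _ hn), ?_⟩
  rw [map_I_smul]
  module

/-- `M` plays the role of `m0`: a complement of the real points of `v + v̄` in those of `K`. -/
theorem existsUnique_eq_add_I_smul_add_I_smul_add (hσ : Involutive σ) (hle : vn ≤ v)
    (hsup : v ⊓ v.map σ ⊔ vn = v) (hdisj : Disjoint (v ⊓ v.map σ) vn) {M : AddSubgroup K}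
    (hMfix : M ≤ fixedAddSubgroup σ) (hMdisj : ∀ m ∈ M, m ∈ v ⊔ v.map σ → m = 0)
    (hMspan : ∀ f ∈ fixedAddSubgroup σ, ∃ w ∈ v ⊔ v.map σ, σ w = w ∧ ∃ m ∈ M, f = w + m)
    (x : K) :
    ∃! t : K × K × K × K, t.1 ∈ fixedAddSubgroup σ ∧ t.2.1 ∈ (I • ·) '' (M : Set K) ∧
      t.2.2.1 ∈ (I • ·) '' ((v : Set K) ∩ fixedAddSubgroup σ) ∧ t.2.2.2 ∈ vn ∧
      x = t.1 + t.2.1 + t.2.2.1 + t.2.2.2 := by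
  refine existsUnique_add_four (A := fixedAddSubgroup σ)
    (B := M.map (DistribSMul.toAddMonoidHom K I))
    (C := (v.toAddSubgroup ⊓ fixedAddSubgroup σ).map (DistribSMul.toAddMonoidHom K I))
    (D := vn.toAddSubgroup) (fun x => ?_) ?_ x
  · obtain ⟨a, ha, m, hm, c, hc, hcfix, n, hn, rfl⟩ :=
      exists_eq_add_I_smul_add_I_smul_add hσ hle hsup hdisj hMspan x
    exact ⟨a, ha, I • m, ⟨m, hm, rfl⟩, I • c, ⟨c, ⟨hc, hcfix⟩, rfl⟩, n, hn, rfl⟩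
  · rintro a ha _ ⟨m, hm, rfl⟩ _ ⟨c, ⟨hc, hcfix⟩, rfl⟩ n hn h
    obtain ⟨rfl, rfl, rfl, rfl⟩ :=
      eq_zero_of_add_I_smul_add_I_smul_add_eq_zero hσ hle hdisj hMfix hMdisj ha hm hc hcfix hn h
    simp

end NReductive

end RealForm

section Complexification

variable (E : Type*) [AddCommGroup E] [Module ℝ E]

noncomputable def complexConj : ℂ ⊗[ℝ] E →ₛₗ[starRingEnd ℂ] ℂ ⊗[ℝ] E where
  toFun := LinearMap.rTensor E conjAe.toLinearMap
  map_add' := map_add _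
  map_smul' c x := by
    induction x using TensorProduct.induction_on with
    | zero => simp
    | tmul z y => simp [TensorProduct.smul_tmul', conjAe_coe]
    | add a b ha hb => simp only [smul_add, map_add, ha, hb]

theorem coe_complexConj :
    ⇑(complexConj E) = ⇑(LinearMap.rTensor E conjAe.toLinearMap) :=
  rfl

noncomputable def complexRe : ℂ ⊗[ℝ] E →ₗ[ℝ] E :=
  TensorProduct.lift ((LinearMap.lsmul ℝ E).comp reLm)

variable {E}

@[simp]
theorem complexConj_tmul (z : ℂ) (y : E) : complexConj E (z ⊗ₜ y) = conj z ⊗ₜ y := by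
  simp [coe_complexConj, conjAe_coe]

theorem involutive_complexConj : Involutive (complexConj E) := fun x => by
  induction x using TensorProduct.induction_on with
  | zero => simp
  | tmul z y => simp
  | add a b ha hb => rw [map_add, map_add, ha, hb]

theorem add_complexConj (x : ℂ ⊗[ℝ] E) :
    x + complexConj E x = (2 : ℂ) • TensorProduct.mk ℝ ℂ E 1 (complexRe E x) := by
  induction x using TensorProduct.induction_on with
  | zero => simp
  | tmul z y =>
    simp [complexRe, TensorProduct.smul_tmul', ← TensorProduct.add_tmul, add_conj]
  | add a b ha hb =>
    rw [map_add, map_add, map_add, smul_add, ← ha, ← hb]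
    abel

theorem coe_fixedAddSubgroup_complexConj :
    (fixedAddSubgroup (complexConj E) : Set (ℂ ⊗[ℝ] E)) = range (TensorProduct.mk ℝ ℂ E 1) := by
  ext x
  constructor
  · intro hx
    refine ⟨complexRe E x, smul_right_injective _ (two_ne_zero (α := ℂ)) ?_⟩
    change (2 : ℂ) • _ = (2 : ℂ) • x
    rw [← add_complexConj, mem_fixedAddSubgroup.mp hx, two_smul]
  · rintro ⟨y, rfl⟩
    simp

theorem existsUnique_eq_mk_add_I_smul_mk_add {v vn : Submodule ℂ (ℂ ⊗[ℝ] E)} (hle : vn ≤ v)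
    (hsup : v ⊓ v.map (complexConj E) ⊔ vn = v)
    (hdisj : Disjoint (v ⊓ v.map (complexConj E)) vn) {M : Submodule ℝ E}
    (hM : IsCompl (((v ⊔ v.map (complexConj E)).restrictScalars ℝ).comap
      (TensorProduct.mk ℝ ℂ E 1)) M) (x : ℂ ⊗[ℝ] E) :
    ∃! t : (ℂ ⊗[ℝ] E) × (ℂ ⊗[ℝ] E) × (ℂ ⊗[ℝ] E) × (ℂ ⊗[ℝ] E),
      t.1 ∈ range (TensorProduct.mk ℝ ℂ E 1) ∧
      t.2.1 ∈ (I • ·) '' (TensorProduct.mk ℝ ℂ E 1 '' M) ∧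
      t.2.2.1 ∈ (I • ·) '' ((v : Set (ℂ ⊗[ℝ] E)) ∩ range (TensorProduct.mk ℝ ℂ E 1)) ∧
      t.2.2.2 ∈ vn ∧ x = t.1 + t.2.1 + t.2.2.1 + t.2.2.2 := by
  rw [← coe_fixedAddSubgroup_complexConj]
  refine existsUnique_eq_add_I_smul_add_I_smul_add involutive_complexConj hle hsup hdisj
    (M := (M.map (TensorProduct.mk ℝ ℂ E 1)).toAddSubgroup) ?_ ?_ ?_ x
  · rintro _ ⟨y, -, rfl⟩
    simp
  · rintro _ ⟨y, hy, rfl⟩ hjy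
    rw [Submodule.disjoint_def.mp hM.disjoint y hjy hy, map_zero]
  · intro f hf
    obtain ⟨y, rfl⟩ : f ∈ range (TensorProduct.mk ℝ ℂ E 1) := by
      rwa [← coe_fixedAddSubgroup_complexConj]
    obtain ⟨w, hw, m, hm, rfl⟩ :=
      Submodule.mem_sup.mp (hM.sup_eq_top ▸ Submodule.mem_top (x := y))
    exact ⟨_, hw, by simp, _, ⟨m, hm, rfl⟩, map_add _ _ _⟩

end Complexification

theorem n_reductive_decomposition_general
    (k0 : Type) [LieRing k0] [LieAlgebra ℝ k0] [Module.Finite ℝ k0]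
    (B : LinearMap.BilinForm ℝ k0)
    (hsymm : ∀ X Y : k0, B X Y = B Y X)
    (hpos : ∀ X : k0, X ≠ 0 → 0 < B X X)
    (v : LieSubalgebra ℂ (ℂ ⊗[ℝ] k0)) (vn : Submodule ℂ (ℂ ⊗[ℝ] k0))
    (hvn_le : (vn : Set (ℂ ⊗[ℝ] k0)) ⊆ v)
    (hnred_span : (v : Set (ℂ ⊗[ℝ] k0)) =
      Set.image2 (· + ·)
        ((v : Set (ℂ ⊗[ℝ] k0)) ∩
          (LinearMap.rTensor k0 Complex.conjAe.toLinearMap '' (v : Set (ℂ ⊗[ℝ] k0))))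
        (vn : Set (ℂ ⊗[ℝ] k0)))
    (hnred_disj : ∀ x ∈ (v : Set (ℂ ⊗[ℝ] k0)) ∩
        (LinearMap.rTensor k0 Complex.conjAe.toLinearMap '' (v : Set (ℂ ⊗[ℝ] k0))),
      x ∈ vn → x = 0) :
    -- first claim: `v_n ⊕ v̄_n = v_n ⊕ ((v_n ⊕ v̄_n) ∩ k0)`, a direct sum
    (Set.image2 (· + ·) (vn : Set (ℂ ⊗[ℝ] k0))
        (LinearMap.rTensor k0 Complex.conjAe.toLinearMap '' (vn : Set (ℂ ⊗[ℝ] k0)))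
      = Set.image2 (· + ·) (vn : Set (ℂ ⊗[ℝ] k0))
          ((Set.image2 (· + ·) (vn : Set (ℂ ⊗[ℝ] k0))
              (LinearMap.rTensor k0 Complex.conjAe.toLinearMap ''
                (vn : Set (ℂ ⊗[ℝ] k0)))) ∩
            Set.range (TensorProduct.mk ℝ ℂ k0 1))) ∧
    (∀ x ∈ (vn : Set (ℂ ⊗[ℝ] k0)), x ∈ Set.range (TensorProduct.mk ℝ ℂ k0 1) → x = 0) ∧
    -- second claim: the real direct sum decomposition `k = k0 ⊕ i·m0 ⊕ (i·v0 ⊕ v_n)`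
    (∀ x : ℂ ⊗[ℝ] k0, ∃! t : (ℂ ⊗[ℝ] k0) × (ℂ ⊗[ℝ] k0) × (ℂ ⊗[ℝ] k0) × (ℂ ⊗[ℝ] k0),
      t.1 ∈ Set.range (TensorProduct.mk ℝ ℂ k0 1) ∧
      t.2.1 ∈ (fun y => Complex.I • y) ''
        (TensorProduct.mk ℝ ℂ k0 1 ''
          {y : k0 | ∀ z : k0,
            ((TensorProduct.mk ℝ ℂ k0 1) z ∈
              Set.image2 (· + ·) (v : Set (ℂ ⊗[ℝ] k0))
                (LinearMap.rTensor k0 Complex.conjAe.toLinearMap ''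
                  (v : Set (ℂ ⊗[ℝ] k0)))) → B y z = 0}) ∧
      t.2.2.1 ∈ (fun y => Complex.I • y) ''
        ((v : Set (ℂ ⊗[ℝ] k0)) ∩ Set.range (TensorProduct.mk ℝ ℂ k0 1)) ∧
      t.2.2.2 ∈ (vn : Set (ℂ ⊗[ℝ] k0)) ∧
      x = t.1 + t.2.1 + t.2.2.1 + t.2.2.2) := by
  rw [← coe_complexConj] at hnred_span hnred_disj ⊢
  set V := v.toSubmodule
  set σ := complexConj k0
  have hsup : V ⊓ V.map σ ⊔ vn = V := by
    apply SetLike.coe_injective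
    rw [Submodule.coe_sup, Submodule.coe_inf, Submodule.map_coe, ← Set.image2_add]
    exact hnred_span.symm
  have hdisj : Disjoint (V ⊓ V.map σ) vn := Submodule.disjoint_def.mpr hnred_disj
  have hV : ((V ⊔ V.map σ : Submodule ℂ _) : Set (ℂ ⊗[ℝ] k0)) =
      image2 (· + ·) ↑v (σ '' ↑v) := by
    rw [Submodule.coe_sup, Submodule.map_coe, Set.image2_add]
    rfl
  set W := ((V ⊔ V.map σ).restrictScalars ℝ).comap (TensorProduct.mk ℝ ℂ k0 1)
  have hm0 : {y : k0 | ∀ z, TensorProduct.mk ℝ ℂ k0 1 z ∈ image2 (· + ·) ↑v (σ '' ↑v) →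
      B y z = 0} = B.orthogonal W := by
    ext y
    exact forall_congr' fun z => by rw [hsymm, ← hV]; rfl
  have hW : IsCompl W (B.orthogonal W) :=
    (LinearMap.BilinForm.isCompl_orthogonal_iff_disjoint fun x y h => (hsymm y x).trans h).mpr
      (Submodule.disjoint_def.mpr fun y hyW hy => by_contra fun h => (hpos y h).ne' (hy y hyW))
  rw [hm0]
  refine ⟨?_, ?_, existsUnique_eq_mk_add_I_smul_mk_add hvn_le hsup hdisj hW⟩
  all_goals rw [← coe_fixedAddSubgroup_complexConj]
  · exact image2_add_image_eq_image2_add_inter_fixedAddSubgroup involutive_complexConj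
      vn.toAddSubgroup
  · exact fun x hx hfix => eq_zero_of_mem_of_map_mem involutive_complexConj hvn_le hdisj hx
      ((mem_fixedAddSubgroup.mp hfix).symm ▸ hvn_le hx)

/-- Let `v` be an n-reductive complex Lie subalgebra of the complexification
`k = ℂ ⊗ k0` of a compact Lie algebra `k0` (with Ad-invariant inner product `B` and
conjugation `σ`), i.e. `v = (v ∩ v̄) ⊕ v_n` with `v_n` the nilradical of `v`.  Then
`v_n ⊕ v̄_n = v_n ⊕ ((v_n ⊕ v̄_n) ∩ k0)` (a direct sum), and consequently `k` decomposes as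
the real direct sum `k = k0 ⊕ i·m0 ⊕ (i·v0 ⊕ v_n)`, where `v0 = v ∩ k0` and `m0` is the
orthogonal complement of `(v + v̄) ∩ k0` in `k0`. -/
theorem n_reductive_decomposition
    (k0 : Type) [LieRing k0] [LieAlgebra ℝ k0] [Module.Finite ℝ k0]
    (B : LinearMap.BilinForm ℝ k0)
    (hsymm : ∀ X Y : k0, B X Y = B Y X)
    (hinv : ∀ X Y Z : k0, B ⁅X, Y⁆ Z + B Y ⁅X, Z⁆ = 0)
    (hpos : ∀ X : k0, X ≠ 0 → 0 < B X X)
    (v : LieSubalgebra ℂ (ℂ ⊗[ℝ] k0)) (vn : Submodule ℂ (ℂ ⊗[ℝ] k0))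
    (hvn_le : (vn : Set (ℂ ⊗[ℝ] k0)) ⊆ v)
    (hvn_nilp : ∀ X ∈ vn, IsNilpotent (LieAlgebra.ad ℂ (ℂ ⊗[ℝ] k0) X))
    (hvn_ideal : ∀ X ∈ v, ∀ N ∈ vn, ⁅X, N⁆ ∈ vn)
    (hnred_span : (v : Set (ℂ ⊗[ℝ] k0)) =
      Set.image2 (· + ·)
        ((v : Set (ℂ ⊗[ℝ] k0)) ∩
          (LinearMap.rTensor k0 Complex.conjAe.toLinearMap '' (v : Set (ℂ ⊗[ℝ] k0))))
        (vn : Set (ℂ ⊗[ℝ] k0)))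
    (hnred_disj : ∀ x ∈ (v : Set (ℂ ⊗[ℝ] k0)) ∩
        (LinearMap.rTensor k0 Complex.conjAe.toLinearMap '' (v : Set (ℂ ⊗[ℝ] k0))),
      x ∈ vn → x = 0) :
    -- first claim: `v_n ⊕ v̄_n = v_n ⊕ ((v_n ⊕ v̄_n) ∩ k0)`, a direct sum
    (Set.image2 (· + ·) (vn : Set (ℂ ⊗[ℝ] k0))
        (LinearMap.rTensor k0 Complex.conjAe.toLinearMap '' (vn : Set (ℂ ⊗[ℝ] k0)))
      = Set.image2 (· + ·) (vn : Set (ℂ ⊗[ℝ] k0))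
          ((Set.image2 (· + ·) (vn : Set (ℂ ⊗[ℝ] k0))
              (LinearMap.rTensor k0 Complex.conjAe.toLinearMap ''
                (vn : Set (ℂ ⊗[ℝ] k0)))) ∩
            Set.range (TensorProduct.mk ℝ ℂ k0 1))) ∧
    (∀ x ∈ (vn : Set (ℂ ⊗[ℝ] k0)), x ∈ Set.range (TensorProduct.mk ℝ ℂ k0 1) → x = 0) ∧
    -- second claim: the real direct sum decomposition `k = k0 ⊕ i·m0 ⊕ (i·v0 ⊕ v_n)`
    (∀ x : ℂ ⊗[ℝ] k0, ∃! t : (ℂ ⊗[ℝ] k0) × (ℂ ⊗[ℝ] k0) × (ℂ ⊗[ℝ] k0) × (ℂ ⊗[ℝ] k0),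
      t.1 ∈ Set.range (TensorProduct.mk ℝ ℂ k0 1) ∧
      t.2.1 ∈ (fun y => Complex.I • y) ''
        (TensorProduct.mk ℝ ℂ k0 1 ''
          {y : k0 | ∀ z : k0,
            ((TensorProduct.mk ℝ ℂ k0 1) z ∈
              Set.image2 (· + ·) (v : Set (ℂ ⊗[ℝ] k0))
                (LinearMap.rTensor k0 Complex.conjAe.toLinearMap ''
                  (v : Set (ℂ ⊗[ℝ] k0)))) → B y z = 0}) ∧
      t.2.2.1 ∈ (fun y => Complex.I • y) ''
        ((v : Set (ℂ ⊗[ℝ] k0)) ∩ Set.range (TensorProduct.mk ℝ ℂ k0 1)) ∧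
      t.2.2.2 ∈ (vn : Set (ℂ ⊗[ℝ] k0)) ∧
      x = t.1 + t.2.1 + t.2.2.1 + t.2.2.2) :=
  n_reductive_decomposition_general k0 B hsymm hpos v vn hvn_le hnred_span hnred_disj
end
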